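/- arXiv:1001.4462 — 2 statements merged into one kernel-verified Lean document; each statement's English description precedes it below -/
import Mathlib

section
/- There exists an optimal plain decompressor; that is, there is a partial computable function U : List Bool →. List Bool such that for every partial computable D : List Bool →. List Bool there is a constant c ∈ ℕ with C_U(x) ≤ C_D(x) + c for all binary strings x. -/
/-!
Enumerate all partial computable functions by their codes. The universal decompressor reads a
string `1ᵏ0y` as "run program number `k` on `y`", so a `D`-description `y` of `x` becomes the
`U`-description `1ᵏ0y` for a fixed code `k` of `D`, which costs only the constant `k + 1`.
-/

open scoped Classical

/-- Complexity of `x` with respect to decompressor `D`: length of a shortest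
`D`-description of `x`, or `⊤` if none exists. -/
noncomputable def Cpx (D : List Bool →. List Bool) (x : List Bool) : ℕ∞ :=
  sInf {n : ℕ∞ | ∃ y : List Bool, x ∈ D y ∧ (y.length : ℕ∞) = n}

/-- A set of strings is prefix-free: no element is a proper prefix of another. -/
def PrefixFreeSet (S : Set (List Bool)) : Prop :=
  ∀ p ∈ S, ∀ q ∈ S, p <+: q → p = q

/-- `U` is an optimal plain decompressor. -/
def OptimalPlain (U : List Bool →. List Bool) : Prop :=
  Partrec U ∧ ∀ D : List Bool →. List Bool, Partrec D →
    ∃ c : ℕ, ∀ x : List Bool, Cpx U x ≤ Cpx D x + (c : ℕ∞)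

/-- `V` is an optimal prefix-free decompressor. -/
def OptimalPrefix (V : List Bool →. List Bool) : Prop :=
  Partrec V ∧ PrefixFreeSet V.Dom ∧
    ∀ D : List Bool →. List Bool, Partrec D → PrefixFreeSet D.Dom →
      ∃ c : ℕ, ∀ x : List Bool, Cpx V x ≤ Cpx D x + (c : ℕ∞)

open Nat.Partrec (Code)
open Encodable

lemma List.idxOf_replicate_append_cons {α : Type*} [DecidableEq α] {a b : α} (hab : a ≠ b)
    (k : ℕ) (l : List α) : (List.replicate k a ++ b :: l).idxOf b = k := by
  rw [List.idxOf_append_of_notMem (by simp [hab.symm]), List.idxOf_cons_self]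
  simp

lemma cpx_le_length {D : List Bool →. List Bool} {x y : List Bool} (h : x ∈ D y) :
    Cpx D x ≤ y.length :=
  sInf_le ⟨y, h, rfl⟩

lemma exists_length_eq_cpx {D : List Bool →. List Bool} {x : List Bool} (h : Cpx D x ≠ ⊤) :
    ∃ y, x ∈ D y ∧ (y.length : ℕ∞) = Cpx D x := by
  have hne : {n : ℕ∞ | ∃ y, x ∈ D y ∧ (y.length : ℕ∞) = n}.Nonempty :=
    Set.nonempty_iff_ne_empty.2 fun hempty => h (by rw [Cpx, hempty, sInf_empty])
  exact csInf_mem hne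

lemma cpx_le_cpx_add_length_of_prefix {U D : List Bool →. List Bool} (p : List Bool)
    (hp : ∀ y, U (p ++ y) = D y) (x : List Bool) : Cpx U x ≤ Cpx D x + p.length := by
  by_cases htop : Cpx D x = ⊤
  · simp [htop]
  obtain ⟨y, hy, hlen⟩ := exists_length_eq_cpx htop
  calc Cpx U x ≤ (p ++ y).length := cpx_le_length (by rwa [hp])
    _ = Cpx D x + p.length := by rw [← hlen, List.length_append, add_comm]; push_cast; rfl

section Universal

variable {β : Type*} [Primcodable β]

def universalDecompressor (s : List Bool) : Part β :=
  ((Denumerable.ofNat Code (s.idxOf false)).eval (encode (s.drop (s.idxOf false + 1)))).bind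
    fun n => Part.ofOption (decode n)

theorem partrec_universalDecompressor :
    Partrec (universalDecompressor (β := β)) := by
  have hk : Primrec fun s : List Bool => s.idxOf false :=
    Primrec.list_idxOf.comp (Primrec.const false) Primrec.id
  have hinput : Primrec fun s : List Bool => s.drop (s.idxOf false + 1) :=
    Primrec.list_drop.comp (Primrec.succ.comp hk) Primrec.id
  exact (Code.eval_part.comp ((Computable.ofNat _).comp hk.to_comp)
    (Computable.encode.comp hinput.to_comp)).bind (Computable.decode.comp Computable.snd).ofOption

theorem universalDecompressor_replicate_append (c : Code) (y : List Bool) :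
    universalDecompressor (List.replicate (encode c) true ++ false :: y) =
      (c.eval (encode y)).bind fun n => Part.ofOption (decode (α := β) n) := by
  have hidx := List.idxOf_replicate_append_cons (a := true) (b := false) (by decide) (encode c) y
  simp [universalDecompressor, hidx, List.drop_append]

theorem exists_prefix_universalDecompressor {D : List Bool →. β}
    (hD : Partrec D) : ∃ p, ∀ y, universalDecompressor (p ++ y) = D y := by
  obtain ⟨c, hc⟩ := Code.exists_code.1 hD
  refine ⟨List.replicate (encode c) true ++ [false], fun y => ?_⟩
  rw [List.append_assoc, List.singleton_append, universalDecompressor_replicate_append, hc]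
  simp [encodek]

end Universal

/-- there exists an optimal plain decompressor. -/
theorem stmt4 :
    ∃ U : List Bool →. List Bool, Partrec U ∧
      ∀ D : List Bool →. List Bool, Partrec D →
        ∃ c : ℕ, ∀ x : List Bool, Cpx U x ≤ Cpx D x + (c : ℕ∞) := by
  refine ⟨universalDecompressor, partrec_universalDecompressor, fun D hD => ?_⟩
  obtain ⟨p, hp⟩ := exists_prefix_universalDecompressor hD
  exact ⟨p.length, cpx_le_cpx_add_length_of_prefix p hp⟩
end

section
/- There exists an optimal plain decompressor U such that no restriction of U is an optimal prefix-free decompressor: for every partial computable V : List Bool →. List Bool whose domain is a prefix-free subset of the domain of U and which agrees with U on its domain, V is not an optimal prefix-free decompressor. -/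
open scoped Classical

/-!
On strings containing a `true`, the decompressor `chainDecomp` below is a universal one
(`0ⁿ1y` runs the `n`-th partial recursive function on `y`), except that it discards outputs
of length one. Those are produced only on the all-`false` strings `0ᵏ`, with output `[k.bodd]`,
which costs at most a constant. A prefix-free optimal restriction `V` dominates the
decompressor defined only on the empty string, so it describes both `[false]` and `[true]`;
its domain would then contain `0ⁱ` and `0ʲ` with `i` even and `j` odd, one a prefix of the other.
-/

open Nat.Partrec (Code)
open Encodable

theorem cpx_le_length_of_mem {D : List Bool →. List Bool} {x p : List Bool} (h : x ∈ D p) :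
    Cpx D x ≤ p.length :=
  sInf_le ⟨p, h, rfl⟩

theorem exists_mem_of_cpx_ne_top {D : List Bool →. List Bool} {x : List Bool}
    (h : Cpx D x ≠ ⊤) : ∃ p, x ∈ D p := by
  by_contra! hx
  refine h (sInf_eq_top.mpr ?_)
  rintro _ ⟨p, hp, -⟩
  exact absurd hp (hx p)

theorem cpx_le_cpx_add {D E : List Bool →. List Bool} {x : List Bool} (k : ℕ)
    (h : ∀ y, x ∈ D y → ∃ p, x ∈ E p ∧ p.length ≤ y.length + k) :
    Cpx E x ≤ Cpx D x + k := by
  by_cases hD : {n : ℕ∞ | ∃ y : List Bool, x ∈ D y ∧ (y.length : ℕ∞) = n}.Nonempty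
  · obtain ⟨y, hy, hlen⟩ := csInf_mem hD
    obtain ⟨p, hp, hplen⟩ := h y hy
    calc Cpx E x ≤ p.length := cpx_le_length_of_mem hp
      _ ≤ ((y.length + k : ℕ) : ℕ∞) := by exact_mod_cast hplen
      _ = Cpx D x + k := by rw [Cpx, ← hlen]; push_cast; rfl
  · have hDx : Cpx D x = ⊤ := by rw [Cpx, Set.not_nonempty_iff_eq_empty.mp hD, sInf_empty]
    simp [hDx]

theorem PrefixFreeSet.eq_of_replicate_mem {S : Set (List Bool)} (hS : PrefixFreeSet S)
    {a : Bool} {i j : ℕ} (hi : List.replicate i a ∈ S) (hj : List.replicate j a ∈ S) :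
    i = j := by
  have prefix_of_le {m n : ℕ} (h : m ≤ n) : List.replicate m a <+: List.replicate n a :=
    ⟨List.replicate (n - m) a, by rw [← List.replicate_add, Nat.add_sub_cancel' h]⟩
  rcases le_total i j with h | h
  · simpa using hS _ hi _ hj (prefix_of_le h)
  · simpa using (hS _ hj _ hi (prefix_of_le h)).symm

def singletonDecomp (x : List Bool) : List Bool →. List Bool :=
  fun y => if y = [] then Part.some x else Part.none

theorem singletonDecomp_partrec (x : List Bool) : Partrec (singletonDecomp x) := by
  refine (Computable.ofOption (Primrec.ite (Primrec.eq.comp Primrec.id (Primrec.const []))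
    (Primrec.const (some x)) (Primrec.const none)).to_comp).of_eq fun y => ?_
  by_cases hy : y = [] <;> simp [singletonDecomp, hy]

theorem prefixFreeSet_dom_singletonDecomp (x : List Bool) :
    PrefixFreeSet (singletonDecomp x).Dom := by
  have hdom : ∀ p ∈ (singletonDecomp x).Dom, p = [] := fun p hp => by
    by_contra h
    simp [singletonDecomp, h] at hp
  intro p hp q hq _
  rw [hdom p hp, hdom q hq]

theorem OptimalPrefix.exists_mem {V : List Bool →. List Bool} (hV : OptimalPrefix V)
    (x : List Bool) : ∃ p, x ∈ V p := by
  obtain ⟨c, hc⟩ := hV.2.2 _ (singletonDecomp_partrec x) (prefixFreeSet_dom_singletonDecomp x)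
  have hlt : Cpx (singletonDecomp x) x + c < ⊤ :=
    ENat.add_lt_top.mpr ⟨(cpx_le_length_of_mem (p := []) (by simp [singletonDecomp])).trans_lt
      (by simp), by simp⟩
  exact exists_mem_of_cpx_ne_top ((hc x).trans_lt hlt).ne

def univDecomp : List Bool →. List Bool := fun p =>
  ((Denumerable.ofNat Code (p.idxOf true)).eval (encode (p.drop (p.idxOf true + 1)))).bind
    fun m => Part.ofOption (decode m)

theorem univDecomp_partrec : Partrec univDecomp := by
  have hidx : Primrec fun p : List Bool => p.idxOf true :=
    Primrec.list_idxOf.comp (Primrec.const true) Primrec.id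
  have hcode : Computable fun p : List Bool => Denumerable.ofNat Code (p.idxOf true) :=
    (Computable.ofNat Code).comp hidx.to_comp
  have harg : Computable fun p : List Bool => encode (p.drop (p.idxOf true + 1)) :=
    Computable.encode.comp (Primrec.list_drop.comp (Primrec.succ.comp hidx) Primrec.id).to_comp
  exact (Code.eval_part.comp hcode harg).bind
    (Computable.ofOption (Computable.decode.comp Computable.snd))

theorem exists_univDecomp_replicate_append_eq {D : List Bool →. List Bool} (hD : Partrec D) :
    ∃ n, ∀ y, univDecomp (List.replicate n false ++ true :: y) = D y := by
  obtain ⟨c, hc⟩ := Code.exists_code.mp hD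
  refine ⟨encode c, fun y => ?_⟩
  have hidx : (List.replicate (encode c) false ++ true :: y).idxOf true = encode c := by
    rw [List.idxOf_append_of_notMem (by simp), List.idxOf_cons_self]; simp
  simp [univDecomp, hidx, hc, encodek, List.drop_append]

def chainDecomp : List Bool →. List Bool := fun p =>
  if true ∈ p then (univDecomp p).bind fun x => if x.length = 1 then Part.none else Part.some x
  else Part.some [p.length.bodd]

theorem chainDecomp_replicate (k : ℕ) :
    chainDecomp (List.replicate k false) = Part.some [k.bodd] := by
  simp [chainDecomp]

theorem mem_chainDecomp_of_mem_univDecomp {p x : List Bool} (hp : true ∈ p)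
    (hx : x ∈ univDecomp p) (hlen : x.length ≠ 1) : x ∈ chainDecomp p := by
  rw [chainDecomp, if_pos hp]
  exact Part.mem_bind_iff.mpr ⟨x, hx, by simp [hlen]⟩

theorem eq_replicate_of_mem_chainDecomp {p x : List Bool} (hx : x ∈ chainDecomp p)
    (hlen : x.length = 1) : p = List.replicate p.length false ∧ x = [p.length.bodd] := by
  by_cases hp : true ∈ p
  · rw [chainDecomp, if_pos hp] at hx
    obtain ⟨y, -, hy⟩ := Part.mem_bind_iff.mp hx
    by_cases hy1 : y.length = 1
    · simp [hy1] at hy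
    · rw [if_neg hy1, Part.mem_some_iff] at hy
      exact absurd (hy ▸ hlen) hy1
  · rw [chainDecomp, if_neg hp, Part.mem_some_iff] at hx
    exact ⟨List.eq_replicate_length.mpr fun b hb => by cases b <;> simp_all, hx⟩

theorem chainDecomp_partrec : Partrec chainDecomp := by
  have hmem : Primrec fun p : List Bool => decide (p.idxOf true < p.length) :=
    (Primrec.nat_lt.comp (Primrec.list_idxOf.comp (Primrec.const true) Primrec.id)
      Primrec.list_length).decide
  have hfilter : Partrec₂ fun (_ : List Bool) (x : List Bool) =>
      Part.ofOption (if x.length = 1 then none else some x) :=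
    Computable.ofOption (Primrec.ite (Primrec.eq.comp (Primrec.list_length.comp Primrec.snd)
      (Primrec.const 1)) (Primrec.const none) (Primrec.option_some.comp Primrec.snd)).to_comp
  have hchain : Computable fun p : List Bool => [p.length.bodd] :=
    (Primrec.list_cons.comp (Primrec.nat_bodd.comp Primrec.list_length)
      (Primrec.const [])).to_comp
  refine (Partrec.cond hmem.to_comp (univDecomp_partrec.bind hfilter) hchain.partrec).of_eq
    fun p => ?_
  by_cases hp : true ∈ p
  · simp only [chainDecomp, if_pos hp, List.idxOf_lt_length_iff.mpr hp, decide_true, cond_true]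
    congr 1; funext x; split_ifs <;> rfl
  · simp [chainDecomp, hp]

theorem optimalPlain_chainDecomp : OptimalPlain chainDecomp := by
  refine ⟨chainDecomp_partrec, fun D hD => ?_⟩
  obtain ⟨n, hn⟩ := exists_univDecomp_replicate_append_eq hD
  refine ⟨n + 1, fun x => ?_⟩
  by_cases hx : x.length = 1
  · obtain ⟨b, rfl⟩ : ∃ b, x = [b] := List.length_eq_one_iff.mp hx
    have hb : [b] ∈ chainDecomp (List.replicate b.toNat false) := by
      rw [chainDecomp_replicate]; cases b <;> exact Part.mem_some _
    calc Cpx chainDecomp [b] ≤ (List.replicate b.toNat false).length := cpx_le_length_of_mem hb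
      _ ≤ ((n + 1 : ℕ) : ℕ∞) := by cases b <;> simp
      _ ≤ Cpx D [b] + (n + 1 : ℕ) := le_add_self
  · refine cpx_le_cpx_add (n + 1) fun y hy => ⟨List.replicate n false ++ true :: y, ?_, ?_⟩
    · exact mem_chainDecomp_of_mem_univDecomp (by simp) ((hn y).symm ▸ hy) hx
    · simp only [List.length_append, List.length_replicate, List.length_cons]; omega

theorem stmt15 :
    ∃ U : List Bool →. List Bool, OptimalPlain U ∧
      ∀ V : List Bool →. List Bool, Partrec V →
        V.Dom ⊆ U.Dom → PrefixFreeSet V.Dom →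
        (∀ (p x : List Bool), x ∈ V p → x ∈ U p) →
        ¬ OptimalPrefix V := by
  refine ⟨chainDecomp, optimalPlain_chainDecomp, fun V _ _ hpf hVU hV => ?_⟩
  obtain ⟨p, hp⟩ := hV.exists_mem [false]
  obtain ⟨q, hq⟩ := hV.exists_mem [true]
  obtain ⟨hp_eq, hp_bodd⟩ := eq_replicate_of_mem_chainDecomp (hVU _ _ hp) rfl
  obtain ⟨hq_eq, hq_bodd⟩ := eq_replicate_of_mem_chainDecomp (hVU _ _ hq) rfl
  have hpq : p.length = q.length :=
    hpf.eq_of_replicate_mem (by rw [← hp_eq]; exact Part.dom_iff_mem.mpr ⟨_, hp⟩)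
      (by rw [← hq_eq]; exact Part.dom_iff_mem.mpr ⟨_, hq⟩)
  rw [hpq, ← hq_bodd] at hp_bodd
  exact absurd hp_bodd (by decide)
end
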